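/- In the FCG direction update d_k = −F(x_k) + β_{k-1} d_{k-1} − θ_{k-1} y_{k-1} with β_{k-1} = F(x_k)^T y_{k-1} / ||F(x_{k-1})||² and θ_{k-1} = F(x_k)^T d_{k-1} / ||F(x_{k-1})||², where y_{k-1} = F(x_k) − F(x_{k-1}), one always has d_k^T F(x_k) = −||F(x_k)||². -/

import Mathlib

open scoped RealInnerProductSpace

theorem real_inner_neg_add_smul_sub_smul_self {E : Type*} [NormedAddCommGroup E]
    [InnerProductSpace ℝ E] {F d y : E} {β θ : ℝ} (h : β * ⟪d, F⟫ = θ * ⟪y, F⟫) :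
    ⟪-F + β • d - θ • y, F⟫ = -‖F‖ ^ 2 := by
  rw [inner_sub_left, inner_add_left, inner_neg_left, real_inner_smul_left,
    real_inner_smul_left, h, real_inner_self_eq_norm_sq]
  ring

theorem stmt12_general (n : ℕ) (Fk Fkm dkm : EuclideanSpace ℝ (Fin n))
    (yk : EuclideanSpace ℝ (Fin n))
    (β θ : ℝ) (hβ : β = ⟪Fk, yk⟫ / ‖Fkm‖ ^ 2) (hθ : θ = ⟪Fk, dkm⟫ / ‖Fkm‖ ^ 2)
    (dk : EuclideanSpace ℝ (Fin n)) (hdk : dk = -Fk + β • dkm - θ • yk) :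
    ⟪dk, Fk⟫ = -‖Fk‖ ^ 2 := by
  have hcancel : β * ⟪dkm, Fk⟫ = θ * ⟪yk, Fk⟫ := by
    rw [hβ, hθ, real_inner_comm dkm, real_inner_comm yk]
    ring
  rw [hdk]
  exact real_inner_neg_add_smul_sub_smul_self hcancel

/-- The FCG direction `d_k = -F(x_k) + β_{k-1} d_{k-1} - θ_{k-1} y_{k-1}` always satisfies
`d_kᵀ F(x_k) = -‖F(x_k)‖²`. -/
theorem stmt12 (n : ℕ) (Fk Fkm dkm : EuclideanSpace ℝ (Fin n)) (hFkm : Fkm ≠ 0)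
    (yk : EuclideanSpace ℝ (Fin n)) (hyk : yk = Fk - Fkm)
    (β θ : ℝ) (hβ : β = ⟪Fk, yk⟫ / ‖Fkm‖ ^ 2) (hθ : θ = ⟪Fk, dkm⟫ / ‖Fkm‖ ^ 2)
    (dk : EuclideanSpace ℝ (Fin n)) (hdk : dk = -Fk + β • dkm - θ • yk) :
    ⟪dk, Fk⟫ = -‖Fk‖ ^ 2 :=
  stmt12_general n Fk Fkm dkm yk β θ hβ hθ dk hdk
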